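/- (Completeness and minimality via fundamental cycles.) Let G be a finite connected simple graph, let T be a spanning tree of G (a connected acyclic spanning subgraph), and let M be an additive commutative group. For each edge e of G not in T, fix a dart d_e along e and let w_e be the fundamental cycle of e: the closed walk consisting of the dart d_e followed by the unique path in T from the head of d_e back to its tail. Then the map that sends a family (g_e), indexed by the non-tree edges of G with values in M, to the dart function d ↦ Σ_e c_{w_e}(d) • g_e is a bijection from such families onto the set of all M-valued flows on G. In particular every equilibrium internal force distribution is represented by a unique choice of stress function pieces on the fundamental loops. -/

import Mathlib

/-!
The signed traversal counts of a closed walk form a `ℤ`-valued flow, so every family of pieces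
yields a flow. The fundamental cycle of a non-tree edge `e` crosses no other non-tree edge and
crosses `e` once, along `d_e`; hence the flow built from `(g_e)` takes the value `g_e` on `d_e`.
This gives injectivity and forces `g_e = f d_e` as the preimage of a flow `f`. The difference of
`f` and the flow built from these pieces is a flow supported on the tree, and such a flow is zero:
every tree edge is a bridge, the only tree edge crossing the cut that it defines, and the net
flow across any cut vanishes.
-/

open Finset

/-- The signed traversal count of a dart `d` by a walk `w`: the number of occurrences of `d`
in `w.darts` minus the number of occurrences of the reverse of `d` in `w.darts`. -/
def signedCount {V : Type*} [DecidableEq V] {G : SimpleGraph V} {u v : V}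
    (w : G.Walk u v) (d : G.Dart) : ℤ :=
  (w.darts.count d : ℤ) - (w.darts.count d.symm : ℤ)

/-- A function from the darts of `G` to an additive commutative group is a flow if it is
antisymmetric under dart reversal and, at every vertex, the sum of its values over the darts
with tail at that vertex is zero. -/
def IsFlow {V : Type*} [Fintype V] (G : SimpleGraph V) [DecidableRel G.Adj] [DecidableEq V]
    {M : Type*} [AddCommGroup M] (f : G.Dart → M) : Prop :=
  (∀ d : G.Dart, f d.symm = -f d) ∧
    ∀ x : V, ∑ d ∈ univ.filter (fun d : G.Dart => d.fst = x), f d = 0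

open SimpleGraph

namespace IsFlow

variable {V : Type*} [Fintype V] [DecidableEq V] {G : SimpleGraph V} [DecidableRel G.Adj]
  {T : SimpleGraph V} {M : Type*} [AddCommGroup M] {f g : G.Dart → M}

lemma smul_const {c : G.Dart → ℤ} (hc : IsFlow G c) (m : M) :
    IsFlow G (fun d => c d • m) :=
  ⟨fun d => by simp only [hc.1 d, neg_smul],
    fun x => by simp only [← Finset.sum_smul, hc.2 x, zero_smul]⟩

lemma sum {ι : Type*} (s : Finset ι) {f : ι → G.Dart → M}
    (hf : ∀ i ∈ s, IsFlow G (f i)) :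
    IsFlow G (fun d => ∑ i ∈ s, f i d) := by
  refine ⟨fun d => ?_, fun x => ?_⟩
  · rw [← Finset.sum_neg_distrib]
    exact Finset.sum_congr rfl fun i hi => (hf i hi).1 d
  · rw [Finset.sum_comm]
    exact Finset.sum_eq_zero fun i hi => (hf i hi).2 x

lemma sub (hf : IsFlow G f) (hg : IsFlow G g) : IsFlow G (f - g) :=
  ⟨fun d => by simp only [Pi.sub_apply, hf.1 d, hg.1 d]; abel,
    fun x => by simp only [Pi.sub_apply, Finset.sum_sub_distrib, hf.2 x, hg.2 x, sub_zero]⟩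

lemma apply_eq_zero_of_edge_eq (hf : IsFlow G f) {d d' : G.Dart} (h : d.edge = d'.edge)
    (hd' : f d' = 0) : f d = 0 := by
  rcases (dart_edge_eq_iff d d').mp h with rfl | rfl
  · exact hd'
  · rw [hf.1, hd', neg_zero]

/-- The darts with both ends in `A` cancel in pairs by antisymmetry. -/
lemma sum_out_eq_zero (hf : IsFlow G f) (A : Finset V) :
    ∑ d ∈ univ.filter (fun d : G.Dart => d.fst ∈ A ∧ d.snd ∉ A), f d = 0 := by
  have hA : ∑ d ∈ univ.filter (fun d : G.Dart => d.fst ∈ A), f d = 0 := by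
    rw [← Finset.sum_fiberwise_eq_sum_filter univ A (fun d : G.Dart => d.fst) f]
    exact Finset.sum_eq_zero fun x _ => hf.2 x
  have hinside :
      ∑ d ∈ univ.filter (fun d : G.Dart => d.fst ∈ A ∧ d.snd ∈ A), f d = 0 := by
    refine Finset.sum_involution (fun d _ => d.symm) (fun d _ => by rw [hf.1 d, add_neg_cancel])
      (fun d _ _ => d.symm_ne) (fun d hd => ?_) (fun d _ => d.symm_symm)
    simp only [Finset.mem_filter, Finset.mem_univ, true_and] at hd ⊢
    exact ⟨hd.2, hd.1⟩
  have hsplit := Finset.sum_filter_add_sum_filter_not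
    (univ.filter (fun d : G.Dart => d.fst ∈ A)) (fun d : G.Dart => d.snd ∈ A) f
  rw [Finset.filter_filter, Finset.filter_filter, hA, hinside, zero_add] at hsplit
  exact hsplit

/-- Cut `G` along the component `A` of `d.snd` in `T` minus the bridge `d.edge`: the only dart
of `T` leaving `A` is `d.symm`, so the vanishing net flow out of `A` is `f d.symm`. -/
lemma apply_eq_zero_of_isBridge (hf : IsFlow G f)
    (h0 : ∀ d : G.Dart, d.edge ∉ T.edgeSet → f d = 0)
    {d : G.Dart} (hb : T.IsBridge d.edge) : f d = 0 := by
  classical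
  set A : Finset V := univ.filter fun x => (T.deleteEdges {d.edge}).Reachable d.snd x with hA
  have hsnd : d.snd ∈ A := by simp [hA]
  have hfst : d.fst ∉ A := by
    simp only [hA, Finset.mem_filter, Finset.mem_univ, true_and]
    exact fun h => (isBridge_iff (u := d.fst) (v := d.snd)).mp hb h.symm
  have hleave :
      ∀ d' : G.Dart, d'.fst ∈ A → d'.snd ∉ A → d'.edge ∈ T.edgeSet → d' = d.symm := by
    intro d' hd'A hd'A' hd'T
    by_cases hedge : d'.edge = d.edge
    · rcases (dart_edge_eq_iff d' d).mp hedge with rfl | rfl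
      · exact absurd hd'A hfst
      · rfl
    · refine absurd ?_ hd'A'
      have hadj : (T.deleteEdges {d.edge}).Adj d'.fst d'.snd :=
        deleteEdges_adj.mpr ⟨hd'T, hedge⟩
      simp only [hA, Finset.mem_filter, Finset.mem_univ, true_and] at hd'A ⊢
      exact hd'A.trans hadj.reachable
  have hout : ∑ d' ∈ univ.filter (fun d' : G.Dart => d'.fst ∈ A ∧ d'.snd ∉ A), f d' =
      f d.symm := by
    refine Finset.sum_eq_single_of_mem d.symm (by simp [hsnd, hfst]) fun d' hd' hne => ?_
    simp only [Finset.mem_filter, Finset.mem_univ, true_and] at hd'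
    exact h0 d' fun hd'T => hne (hleave d' hd'.1 hd'.2 hd'T)
  rw [← neg_eq_zero, ← hf.1, ← hout, hf.sum_out_eq_zero]

lemma eq_zero_of_isAcyclic (hT : T.IsAcyclic) (hf : IsFlow G f)
    (h0 : ∀ d : G.Dart, d.edge ∉ T.edgeSet → f d = 0) : f = 0 := by
  funext d
  by_cases hd : d.edge ∈ T.edgeSet
  · exact hf.apply_eq_zero_of_isBridge h0 (isAcyclic_iff_forall_isBridge.mp hT hd)
  · exact h0 d hd

end IsFlow

section SignedCount

variable {V : Type*} [DecidableEq V] {G : SimpleGraph V}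

lemma signedCount_symm {u v : V} (w : G.Walk u v) (d : G.Dart) :
    signedCount w d.symm = -signedCount w d := by
  rw [signedCount, signedCount, Dart.symm_symm, neg_sub]

lemma signedCount_nil {u : V} (d : G.Dart) : signedCount (Walk.nil : G.Walk u u) d = 0 := by
  simp [signedCount]

lemma signedCount_cons {u v w : V} (h : G.Adj u v) (p : G.Walk v w) (d : G.Dart) :
    signedCount (Walk.cons h p) d = signedCount p d +
      ((if (⟨(u, v), h⟩ : G.Dart) = d then 1 else 0) -
        if (⟨(u, v), h⟩ : G.Dart).symm = d then 1 else 0) := by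
  have hsymm : ((⟨(u, v), h⟩ : G.Dart) = d.symm) ↔ (⟨(u, v), h⟩ : G.Dart).symm = d :=
    ⟨fun hd => hd ▸ d.symm_symm, fun hd => hd ▸ (Dart.symm_symm _).symm⟩
  simp only [signedCount, Walk.darts_cons, List.count_cons, beq_iff_eq, hsymm]
  push_cast
  ring

end SignedCount

section Outflow

variable {V : Type*} [Fintype V] [DecidableEq V] {G : SimpleGraph V} [DecidableRel G.Adj]

lemma sum_signedCount_fst_eq {u v : V} (w : G.Walk u v) (x : V) :
    ∑ d ∈ univ.filter (fun d : G.Dart => d.fst = x), signedCount w d =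
      (if u = x then 1 else 0) - if v = x then 1 else 0 := by
  induction w with
  | nil => simp [signedCount_nil]
  | @cons u v w h p ih =>
    simp only [signedCount_cons, Finset.sum_add_distrib, Finset.sum_sub_distrib, ih,
      Finset.sum_ite_eq, Finset.mem_filter, Finset.mem_univ, true_and]
    simp only [Dart.symm_mk, Prod.fst_swap]
    grind

lemma isFlow_signedCount {u : V} (w : G.Walk u u) : IsFlow G (signedCount w) :=
  ⟨signedCount_symm w, fun x => by rw [sum_signedCount_fst_eq, sub_self]⟩

end Outflow

section FundamentalCycle

variable {V : Type*} [DecidableEq V] {G T : SimpleGraph V}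

lemma signedCount_mapLe_of_edge_notMem (hle : T ≤ G) {u v : V} (p : T.Walk u v) {d : G.Dart}
    (hd : d.edge ∉ T.edgeSet) : signedCount (p.mapLe hle) d = 0 := by
  have hmem : ∀ d' ∈ (p.mapLe hle).darts, d'.edge ∈ T.edgeSet := fun d' hd' =>
    p.edges_subset_edgeSet (Walk.edges_mapLe_eq_edges hle p ▸ List.mem_map_of_mem hd')
  rw [signedCount, List.count_eq_zero.mpr fun h => hd (hmem _ h),
    List.count_eq_zero.mpr fun h => hd (d.edge_symm ▸ hmem _ h), sub_self]

lemma signedCount_cons_mapLe_self (hle : T ≤ G) {d : G.Dart} (p : T.Walk d.snd d.fst)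
    (hd : d.edge ∉ T.edgeSet) : signedCount (Walk.cons d.adj (p.mapLe hle)) d = 1 := by
  rw [signedCount_cons, signedCount_mapLe_of_edge_notMem hle p hd, if_pos rfl,
    if_neg d.symm_ne]
  rfl

lemma signedCount_cons_mapLe_of_edge_ne (hle : T ≤ G) {d₀ d : G.Dart}
    (p : T.Walk d₀.snd d₀.fst) (hd : d.edge ∉ T.edgeSet) (hne : d₀.edge ≠ d.edge) :
    signedCount (Walk.cons d₀.adj (p.mapLe hle)) d = 0 := by
  rw [signedCount_cons, signedCount_mapLe_of_edge_notMem hle p hd,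
    if_neg fun h => hne (congrArg Dart.edge h), if_neg fun h => hne (by rw [← h, Dart.edge_symm])]
  rfl

lemma sum_signedCount_cons_mapLe_smul_apply (hle : T ≤ G) {ι M : Type*} [Fintype ι]
    [AddCommGroup M] (dart : ι → G.Dart)
    (hinj : ∀ i j, (dart i).edge = (dart j).edge → i = j)
    (hnot : ∀ i, (dart i).edge ∉ T.edgeSet) (q : ∀ i, T.Walk (dart i).snd (dart i).fst)
    (g : ι → M) (i : ι) :
    ∑ j, signedCount (Walk.cons (dart j).adj ((q j).mapLe hle)) (dart i) • g j = g i := by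
  rw [Finset.sum_eq_single i (fun j _ hji => ?_) (by simp),
    signedCount_cons_mapLe_self hle (q i) (hnot i), one_smul]
  rw [signedCount_cons_mapLe_of_edge_ne hle (q j) (hnot i) fun h => hji (hinj j i h), zero_smul]

end FundamentalCycle

theorem bijective_fundamentalCycle_pieces_onto_flows_general {V : Type*} [Fintype V] [DecidableEq V]
    {G : SimpleGraph V} [DecidableRel G.Adj]
    (T : SimpleGraph V) [DecidableRel T.Adj] (hle : T ≤ G) (hT : T.IsTree)
    {M : Type*} [AddCommGroup M]
    (dart : {e : Sym2 V // e ∈ G.edgeSet ∧ e ∉ T.edgeSet} → G.Dart)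
    (hdart : ∀ e, (dart e).edge = (e : Sym2 V))
    (q : ∀ e, T.Walk (dart e).snd (dart e).fst) :
    Set.BijOn
      (fun (g : {e : Sym2 V // e ∈ G.edgeSet ∧ e ∉ T.edgeSet} → M) (d : G.Dart) =>
        ∑ e, signedCount (SimpleGraph.Walk.cons (dart e).adj ((q e).mapLe hle)) d • g e)
      Set.univ {f : G.Dart → M | IsFlow G f} := by
  have hflow (g : {e : Sym2 V // e ∈ G.edgeSet ∧ e ∉ T.edgeSet} → M) :
      IsFlow G fun d => ∑ e, signedCount (Walk.cons (dart e).adj ((q e).mapLe hle)) d • g e :=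
    IsFlow.sum univ fun e _ => (isFlow_signedCount _).smul_const (g e)
  have heval := sum_signedCount_cons_mapLe_smul_apply (M := M) hle dart
    (fun e e' h => Subtype.ext ((hdart e).symm.trans (h.trans (hdart e'))))
    (fun e => by rw [hdart]; exact e.2.2) q
  refine ⟨fun g _ => hflow g, fun g₁ _ g₂ _ h => funext fun e => ?_, fun f hf => ?_⟩
  · rw [← heval g₁ e, ← heval g₂ e]
    exact congrFun h (dart e)
  · refine ⟨fun e => f (dart e), trivial, sub_eq_zero.mp ?_⟩
    refine ((hflow _).sub hf).eq_zero_of_isAcyclic hT.isAcyclic fun d hd => ?_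
    let e : {e : Sym2 V // e ∈ G.edgeSet ∧ e ∉ T.edgeSet} := ⟨d.edge, d.edge_mem, hd⟩
    exact ((hflow _).sub hf).apply_eq_zero_of_edge_eq (hdart e).symm
      (sub_eq_zero.mpr (heval _ e))

/-- Completeness and minimality via fundamental cycles: let `T` be a spanning tree of a finite
connected simple graph `G`.  For each edge of `G` not in `T`, fix a dart `dart e` along it and
let the fundamental cycle `w e` be that dart followed by the (unique) path in `T` from its head
back to its tail.  Then the map sending a family `g` of stress function pieces, indexed by the
non-tree edges with values in an additive commutative group `M`, to the dart function
`d ↦ ∑ e, c_{w e}(d) • g e` is a bijection onto the set of all `M`-valued flows on `G`. -/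
theorem bijective_fundamentalCycle_pieces_onto_flows {V : Type*} [Fintype V] [DecidableEq V]
    {G : SimpleGraph V} [DecidableRel G.Adj] (hG : G.Connected)
    (T : SimpleGraph V) [DecidableRel T.Adj] (hle : T ≤ G) (hT : T.IsTree)
    {M : Type*} [AddCommGroup M]
    (dart : {e : Sym2 V // e ∈ G.edgeSet ∧ e ∉ T.edgeSet} → G.Dart)
    (hdart : ∀ e, (dart e).edge = (e : Sym2 V))
    (q : ∀ e, T.Walk (dart e).snd (dart e).fst)
    (hq : ∀ e, (q e).IsPath) :
    Set.BijOn
      (fun (g : {e : Sym2 V // e ∈ G.edgeSet ∧ e ∉ T.edgeSet} → M) (d : G.Dart) =>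
        ∑ e, signedCount (SimpleGraph.Walk.cons (dart e).adj ((q e).mapLe hle)) d • g e)
      Set.univ {f : G.Dart → M | IsFlow G f} :=
  bijective_fundamentalCycle_pieces_onto_flows_general T hle hT dart hdart q
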